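/- Let A be a finite set of agents and a ∈ A. The formula (⋀_{b ∈ A\{a}} (□_b p ∧ C□_b p ∧ □_b □_a p ∧ C□_b □_a p) ∧ □_a p) → Cp is valid on all frames where every accessibility relation is serial and transitive, but is not valid on all frames where every accessibility relation is serial. Hence CKD4 ∩ C_alt is not contained in CKD ∩ C_alt. -/

import Mathlib

/-- Formulas of the multi-agent modal language with common belief. -/
inductive CFm (A : Type) : Type
  | atom : ℕ → CFm A
  | neg : CFm A → CFm A
  | and : CFm A → CFm A → CFm A
  | box : A → CFm A → CFm A
  | cb : CFm A → CFm A

namespace CFm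
def imp {A : Type} (φ ψ : CFm A) : CFm A := .neg (.and φ (.neg ψ))
def or {A : Type} (φ ψ : CFm A) : CFm A := .neg (.and (.neg φ) (.neg ψ))
def dia {A : Type} (a : A) (φ : CFm A) : CFm A := .neg (.box a (.neg φ))
def cdual {A : Type} (φ : CFm A) : CFm A := .neg (.cb (.neg φ))
def bot {A : Type} : CFm A := .and (.atom 0) (.neg (.atom 0))
def verum {A : Type} : CFm A := .neg bot
def conj {A : Type} (l : List (CFm A)) : CFm A := l.foldr .and verum
end CFm

structure Kripke (A W : Type) where
  R : A → W → W → Prop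
  V : ℕ → W → Prop

def Ser {W : Type} (R : W → W → Prop) : Prop := ∀ u, ∃ v, R u v
def Eucl {W : Type} (R : W → W → Prop) : Prop := ∀ u v w, R u v → R u w → R v w

/-- Satisfaction; Cφ holds at u iff φ holds at all worlds reachable from u by the
transitive closure of the union of the accessibility relations. -/
def CSat {A W : Type} (M : Kripke A W) : W → CFm A → Prop
  | w, .atom n => M.V n w
  | w, .neg φ => ¬ CSat M w φ
  | w, .and φ ψ => CSat M w φ ∧ CSat M w ψ
  | w, .box a φ => ∀ v, M.R a w v → CSat M v φ
  | w, .cb φ => ∀ v, Relation.TransGen (fun x y => ∃ a : A, M.R a x y) w v → CSat M v φ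

/-- Formulas whose only modality is C. -/
inductive Conly {A : Type} : CFm A → Prop
  | atom (n : ℕ) : Conly (.atom n)
  | neg {φ : CFm A} : Conly φ → Conly (.neg φ)
  | and {φ ψ : CFm A} : Conly φ → Conly ψ → Conly (.and φ ψ)
  | cb {φ : CFm A} : Conly φ → Conly (.cb φ)

/-- C-free agent-alternating fragments L_{-a} (within the C language). -/
inductive PLMinus {A : Type} : A → CFm A → Prop
  | atom (a : A) (n : ℕ) : PLMinus a (.atom n)
  | box {a x : A} {ψ : CFm A} : x ≠ a → PLMinus x ψ → PLMinus a (.box x ψ)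
  | neg {a : A} {φ : CFm A} : PLMinus a φ → PLMinus a (.neg φ)
  | and {a : A} {φ ψ : CFm A} : PLMinus a φ → PLMinus a ψ → PLMinus a (.and φ ψ)

/-- C-free agent-alternating fragment L_alt (within the C language). -/
inductive PLAlt {A : Type} : CFm A → Prop
  | atom (n : ℕ) : PLAlt (.atom n)
  | chi {φ : CFm A} (a : A) : PLMinus a φ → PLAlt φ
  | neg {φ : CFm A} : PLAlt φ → PLAlt (.neg φ)
  | and {φ ψ : CFm A} : PLAlt φ → PLAlt ψ → PLAlt (.and φ ψ)

/-- L_alt C^p: Boolean combinations of agent-alternating formulas and C-only formulas. -/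
inductive LaltCp {A : Type} : CFm A → Prop
  | alt {φ : CFm A} : PLAlt φ → LaltCp φ
  | conly {φ : CFm A} : Conly φ → LaltCp φ
  | neg {φ : CFm A} : LaltCp φ → LaltCp (.neg φ)
  | and {φ ψ : CFm A} : LaltCp φ → LaltCp ψ → LaltCp (.and φ ψ)

/-- The fragments C_{-a}: L_{-a} extended with the clause Cφ. -/
inductive CMinus {A : Type} : A → CFm A → Prop
  | atom (a : A) (n : ℕ) : CMinus a (.atom n)
  | box {a x : A} {ψ : CFm A} : x ≠ a → CMinus x ψ → CMinus a (.box x ψ)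
  | neg {a : A} {φ : CFm A} : CMinus a φ → CMinus a (.neg φ)
  | and {a : A} {φ ψ : CFm A} : CMinus a φ → CMinus a ψ → CMinus a (.and φ ψ)
  | cb {a : A} {φ : CFm A} : CMinus a φ → CMinus a (.cb φ)

/-- The fragment C_alt: L_alt extended with the clause Cφ. -/
inductive CAlt {A : Type} : CFm A → Prop
  | atom (n : ℕ) : CAlt (.atom n)
  | chi {φ : CFm A} (a : A) : CMinus a φ → CAlt φ
  | neg {φ : CFm A} : CAlt φ → CAlt (.neg φ)
  | and {φ ψ : CFm A} : CAlt φ → CAlt ψ → CAlt (.and φ ψ)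
  | cb {φ : CFm A} : CAlt φ → CAlt (.cb φ)

/-- Validity on all frames whose relations satisfy P. -/
def CValidOn {A : Type} (P : ∀ {W : Type}, (W → W → Prop) → Prop) (φ : CFm A) : Prop :=
  ∀ (W : Type) (M : Kripke A W), (∀ a : A, P (M.R a)) → ∀ w : W, CSat M w φ


/-!
On a frame where `R_a` is transitive, `□_a p` holds at every world reachable from the
evaluation world (reflexively): an `a`-step preserves it by transitivity, and a `b`-step with
`b ≠ a` ends in a world where it holds by `□_b□_a p` or `C□_b□_a p`. So every world reached
by a nonempty path satisfies `p`, by `□_a p` or by `□_b p`, `C□_b p` at its predecessor.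
Without transitivity the path `w1 → w2 → w3` of `a`-steps escapes `□_a p`, while every
`b`-step ends in `v1`, where all the hypotheses hold.
-/

open Relation

section Semantics

variable {A W : Type} (M : Kripke A W)

def Kripke.Step (x y : W) : Prop := ∃ a : A, M.R a x y

variable {M}

theorem CSat_verum (w : W) : CSat M w CFm.verum := by
  simp [CFm.verum, CFm.bot, CSat]

theorem CSat_conj {w : W} {l : List (CFm A)} :
    CSat M w (CFm.conj l) ↔ ∀ φ ∈ l, CSat M w φ := by
  induction l with
  | nil => simpa [CFm.conj] using CSat_verum w
  | cons φ l ih => simp [CFm.conj, CSat, ← ih]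

theorem CSat_cb_of_forall {φ : CFm A} (h : ∀ v, CSat M v φ) (w : W) : CSat M w (.cb φ) :=
  fun v _ => h v

theorem CSat_of_reflTransGen {φ : CFm A} {w v : W} (h : CSat M w φ) (hC : CSat M w (.cb φ))
    (hv : ReflTransGen M.Step w v) : CSat M v φ := by
  rcases reflTransGen_iff_eq_or_transGen.mp hv with rfl | hv
  exacts [h, hC v hv]

end Semantics

theorem CAlt_conj {A : Type} {l : List (CFm A)} (h : ∀ φ ∈ l, CAlt φ) : CAlt (CFm.conj l) := by
  induction l with
  | nil => exact .neg (.and (.atom 0) (.neg (.atom 0)))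
  | cons φ l ih =>
    exact .and (h φ List.mem_cons_self) (ih fun ψ hψ => h ψ (List.mem_cons_of_mem _ hψ))

namespace SeparatingFormula

variable {A : Type}

def p : CFm A := .atom 0

def clause (a b : A) : CFm A :=
  .and (.box b p) (.and (.cb (.box b p)) (.and (.box b (.box a p)) (.cb (.box b (.box a p)))))

section Formula

variable [Fintype A] [DecidableEq A]

noncomputable def premise (a : A) : CFm A :=
  .and (CFm.conj ((Finset.univ.erase a).toList.map (clause a))) (.box a p)

noncomputable def formula (a : A) : CFm A := CFm.imp (premise a) (.cb p)

theorem CSat_premise_iff {W : Type} {M : Kripke A W} {w : W} {a : A} :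
    CSat M w (premise a) ↔ (∀ b ≠ a, CSat M w (clause a b)) ∧ CSat M w (.box a p) := by
  simp [premise, CSat, CSat_conj]

theorem CAlt_formula [Nontrivial A] (a : A) : CAlt (formula a) := by
  obtain ⟨c, hca⟩ := exists_ne a
  have hclause : ∀ b ≠ a, CAlt (clause a b) := fun b hba =>
    have hbp : CAlt (.box b p) := .chi a (.box hba (.atom b 0))
    have hbap : CAlt (.box b (.box a p)) := .chi a (.box hba (.box hba.symm (.atom a 0)))
    .and hbp (.and hbp.cb (.and hbap hbap.cb))
  refine .neg (.and (.and (CAlt_conj ?_) (.chi c (.box hca.symm (.atom a 0))))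
    (.neg (.cb (.atom 0))))
  simp only [List.mem_map, Finset.mem_toList, Finset.mem_erase]
  rintro _ ⟨b, ⟨hba, -⟩, rfl⟩
  exact hclause b hba

section Transitive

variable {W : Type} {M : Kripke A W} {a : A} {w : W}

theorem CSat_box_of_reflTransGen (htr : Transitive (M.R a)) (h : CSat M w (premise a)) {v : W}
    (hv : ReflTransGen M.Step w v) : CSat M v (.box a p) := by
  obtain ⟨hothers, ha⟩ := CSat_premise_iff.mp h
  induction hv with
  | refl => exact ha
  | tail hv hstep ih =>
    obtain ⟨c, hc⟩ := hstep
    by_cases hca : c = a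
    · subst hca
      exact fun x hx => ih x (htr hc hx)
    · obtain ⟨-, -, hbap, hCbap⟩ := hothers c hca
      exact CSat_of_reflTransGen (φ := .box c (.box a p)) hbap hCbap hv _ hc

theorem CSat_formula_of_transitive (htr : Transitive (M.R a)) (w : W) : CSat M w (formula a) := by
  simp only [formula, CFm.imp, CSat, not_and, not_not]
  intro h u hu
  obtain ⟨v, hv, c, hc⟩ := TransGen.tail'_iff.mp hu
  by_cases hca : c = a
  · subst hca
    exact CSat_box_of_reflTransGen htr h hv u hc
  · obtain ⟨hbp, hCbp, -⟩ := (CSat_premise_iff.mp h).1 c hca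
    exact CSat_of_reflTransGen (φ := .box c p) hbp hCbp hv u hc

end Transitive

theorem valid_serial_transitive (a : A) :
    CValidOn (fun {W} (R : W → W → Prop) => Ser R ∧ Transitive R) (formula a) :=
  fun _ _ hM => CSat_formula_of_transitive (hM a).2

end Formula

section CounterModel

variable [DecidableEq A]

/-- Worlds `w1, w2, w3, v1` are `0, 1, 2, 3`; `p` is false only at `w3`. -/
def counterModel (a : A) : Kripke A (Fin 4) where
  R c x y :=
    if c = a then (x = 0 ∧ y = 1) ∨ (x ∈ ({1, 2} : Finset _) ∧ y ∈ ({1, 2} : Finset _)) ∨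
      (x = 3 ∧ y = 3)
    else y = 3
  V _ x := x ≠ 2

theorem counterModel_serial (a c : A) : Ser ((counterModel a).R c) := by
  by_cases hca : c = a
  · simp only [Ser, counterModel, hca, if_true]
    decide
  · exact fun _ => ⟨3, by simp [counterModel, hca]⟩

theorem CSat_counterModel_box_a_three (a : A) : CSat (counterModel a) 3 (.box a p) := by
  simp only [CSat, counterModel, p, if_true]
  decide

theorem CSat_counterModel_clause {a b : A} (hba : b ≠ a) (w : Fin 4) :
    CSat (counterModel a) w (clause a b) := by
  have hbp : ∀ v, CSat (counterModel a) v (.box b p) := fun _ u hu => by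
    simp only [counterModel, hba, if_false] at hu
    simp [CSat, counterModel, p, hu]
  have hbap : ∀ v, CSat (counterModel a) v (.box b (.box a p)) := fun _ u hu => by
    simp only [counterModel, hba, if_false] at hu
    exact hu ▸ CSat_counterModel_box_a_three a
  exact ⟨hbp w, CSat_cb_of_forall hbp w, hbap w, CSat_cb_of_forall hbap w⟩

theorem CSat_counterModel_premise [Fintype A] (a : A) : CSat (counterModel a) 0 (premise a) := by
  refine CSat_premise_iff.mpr ⟨fun b hba => CSat_counterModel_clause hba 0, ?_⟩
  simp only [CSat, counterModel, p, if_true]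
  decide

theorem not_CSat_counterModel_cb (a : A) : ¬ CSat (counterModel a) 0 (.cb p) := by
  intro h
  exact h 2 (.tail (b := 1) (.single ⟨a, by simp [counterModel]⟩) ⟨a, by simp [counterModel]⟩) rfl

theorem not_valid_serial [Fintype A] (a : A) :
    ¬ CValidOn (fun {W} (R : W → W → Prop) => Ser R) (formula a) := by
  intro hvalid
  have h := hvalid _ (counterModel a) (counterModel_serial a) 0
  simp only [formula, CFm.imp, CSat, not_and, not_not] at h
  exact not_CSat_counterModel_cb a (h (CSat_counterModel_premise a))

end CounterModel

end SeparatingFormula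

open SeparatingFormula in
/-- the formula (⋀_{b≠a}(□_b p ∧ C□_b p ∧ □_b□_a p ∧ C□_b□_a p) ∧ □_a p) → Cp
is valid on serial transitive frames but not on serial frames; hence
CKD4 ∩ C_alt ⊄ CKD ∩ C_alt. -/
theorem stmt13 {A : Type} [Fintype A] [DecidableEq A] (hA : ∃ x y : A, x ≠ y) (a : A) :
    CValidOn (fun {W} (R : W → W → Prop) => Ser R ∧ Transitive R)
      (CFm.imp
        (.and
          (CFm.conj ((Finset.univ.erase a).toList.map fun b =>
            CFm.and (.box b (.atom 0))
              (.and (.cb (.box b (.atom 0)))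
                (.and (.box b (.box a (.atom 0))) (.cb (.box b (.box a (.atom 0))))))))
          (.box a (.atom 0)))
        (.cb (.atom 0))) ∧
    ¬ CValidOn (fun {W} (R : W → W → Prop) => Ser R)
      (CFm.imp
        (.and
          (CFm.conj ((Finset.univ.erase a).toList.map fun b =>
            CFm.and (.box b (.atom 0))
              (.and (.cb (.box b (.atom 0)))
                (.and (.box b (.box a (.atom 0))) (.cb (.box b (.box a (.atom 0))))))))
          (.box a (.atom 0)))
        (.cb (.atom 0))) ∧
    ∃ χ : CFm A, CAlt χ ∧
      CValidOn (fun {W} (R : W → W → Prop) => Ser R ∧ Transitive R) χ ∧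
      ¬ CValidOn (fun {W} (R : W → W → Prop) => Ser R) χ := by
  obtain ⟨x, y, hxy⟩ := hA
  have : Nontrivial A := ⟨⟨x, y, hxy⟩⟩
  exact ⟨valid_serial_transitive a, not_valid_serial a,
    formula a, CAlt_formula a, valid_serial_transitive a, not_valid_serial a⟩
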